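/- Let V be a finite set of nodes with a degree function d : V → ℕ such that after removing the q nodes of highest degree, the maximum remaining degree is at most m·(q/|V|)^{1/(1−α)} whenever q ≥ k|V|, where α > 1 and m ≥ 1. If all edges incident to the top k-fraction of nodes (hubs) are preserved and, in the worst case, every edge joining two non-hub nodes is cut, then the edge-cut ratio EC satisfies EC ≤ (1/|E|) · Σ_{q=0}^{|V|(1−k)−1} m·(k + q/|V|)^{1/(1−α)}. -/

import Mathlib

/-- Edge-cut bound for the streaming partitioning of a power-law graph:
if removing the `q` nodes of highest degree (for `q ≥ k·|V|`) leaves maximum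
degree at most `m·(q/|V|)^{1/(1−α)}`, edges incident to hubs are preserved and
only edges between two non-hubs may be cut, then
`EC ≤ (1/|E|)·Σ_{q=0}^{|V|(1−k)−1} m·(k + q/|V|)^{1/(1−α)}`. -/
theorem stmt_1 {V : Type*} [Fintype V] [DecidableEq V]
    (Edges Cut : Finset (V × V)) (Hub : Finset V)
    (k m α : ℝ) (hα : 1 < α) (hm : 1 ≤ m) (hk0 : 0 ≤ k) (hk1 : k ≤ 1)
    (hE : 0 < Edges.card)
    (deg : V → ℕ)
    (hdeg : ∀ v : V, deg v = (Edges.filter (fun e => e.1 = v ∨ e.2 = v)).card)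
    (hHubCard : (Hub.card : ℝ) = k * Fintype.card V)
    (hHubTop : ∀ i ∈ Hub, ∀ j ∉ Hub, deg j ≤ deg i)
    (hRemoval : ∀ S : Finset V, (∀ i ∈ S, ∀ j ∉ S, deg j ≤ deg i) →
      k * Fintype.card V ≤ S.card →
      ∀ j ∉ S, (deg j : ℝ) ≤ m * ((S.card : ℝ) / Fintype.card V) ^ ((1 : ℝ) / (1 - α)))
    (hCutSub : Cut ⊆ Edges)
    (hCutNonHub : ∀ e ∈ Cut, e.1 ∉ Hub ∧ e.2 ∉ Hub) :
    (Cut.card : ℝ) / Edges.card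
      ≤ (1 / (Edges.card : ℝ)) *
          ∑ q ∈ Finset.range (Fintype.card V - Hub.card),
            m * (k + (q : ℝ) / Fintype.card V) ^ ((1 : ℝ) / (1 - α)) := by
  classical
  obtain ⟨e0, he0⟩ := Finset.card_pos.mp hE
  haveI : Nonempty V := ⟨e0.1⟩
  have hC : 0 < Fintype.card V := Fintype.card_pos
  set C := Fintype.card V with hCdef
  set N := Edges.card with hNdef
  have hdegle : ∀ v, deg v ≤ N := fun v => by
    rw [hdeg]; exact Finset.card_filter_le _ _
  let emb := Fintype.equivFin V
  have hembC : ∀ v : V, (emb v : ℕ) < C := fun v => (emb v).2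
  let key : V → ℕ := fun v => (emb v : ℕ) + (N - deg v) * C
  have hkeyinj : Function.Injective key := by
    intro a b hab
    have h1 : (emb a : ℕ) % C = (emb b : ℕ) % C := by
      have := congrArg (· % C) hab
      simpa [key, Nat.add_mul_mod_self_right] using this
    have h2 : (emb a : ℕ) = (emb b : ℕ) := by
      rwa [Nat.mod_eq_of_lt (hembC a), Nat.mod_eq_of_lt (hembC b)] at h1
    exact emb.injective (Fin.ext h2)
  have hkeymono : ∀ a b : V, key a ≤ key b → deg b ≤ deg a := by
    intro a b hab
    by_contra h
    push_neg at h
    have hda := hdegle a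
    have hdb := hdegle b
    have h1 : N - deg b + 1 ≤ N - deg a := by omega
    have h2 : (N - deg b) * C + C ≤ (N - deg a) * C := by
      calc (N - deg b) * C + C = (N - deg b + 1) * C := by ring
        _ ≤ (N - deg a) * C := Nat.mul_le_mul_right C h1
    have h3 := hembC b
    simp only [key] at hab
    omega
  letI : LinearOrder V := LinearOrder.lift' key hkeyinj
  have hle_iff : ∀ a b : V, a ≤ b ↔ key a ≤ key b := fun a b => Iff.rfl
  let l := Finset.sort Hubᶜ (· ≤ · : V → V → Prop)
  have hlnd : l.Nodup := Finset.sort_nodup _ _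
  have hlmem : ∀ a, a ∈ l ↔ a ∉ Hub := by
    intro a
    rw [show (a ∈ l) = (a ∈ Finset.sort Hubᶜ (· ≤ ·)) from rfl, Finset.mem_sort,
      Finset.mem_compl]
  have hlen : l.length = C - Hub.card := by
    rw [show l.length = (Finset.sort Hubᶜ (· ≤ ·)).length from rfl, Finset.length_sort,
      Finset.card_compl]
  have hsorted : List.Pairwise (· ≤ ·) l := Finset.pairwise_sort _ _
  -- degree bound for the q-th non-hub in decreasing order of degree
  have hdegbound : ∀ q (hq : q < l.length),
      (deg (l[q]'hq) : ℝ) ≤ m * (k + (q : ℝ) / C) ^ ((1 : ℝ) / (1 - α)) := by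
    intro q hq
    set S : Finset V := Hub ∪ (l.take q).toFinset with hS
    have htake_sub : ∀ x ∈ l.take q, x ∈ l := fun x hx => List.mem_of_mem_take hx
    have htake_nd : (l.take q).Nodup := hlnd.sublist (List.take_sublist q l)
    have htlen : (l.take q).length = q := by
      rw [List.length_take]; omega
    have hdisj : Disjoint Hub (l.take q).toFinset := by
      rw [Finset.disjoint_right]
      intro a ha
      rw [List.mem_toFinset] at ha
      exact (hlmem a).mp (htake_sub a ha)
    have hScard : S.card = Hub.card + q := by
      rw [hS, Finset.card_union_of_disjoint hdisj, List.toFinset_card_of_nodup htake_nd,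
        htlen]
    have hmem_take : ∀ j, j ∈ l → List.idxOf j l < q → j ∈ (l.take q).toFinset := by
      intro j hj hlt
      rw [List.mem_toFinset]
      have h1 : List.idxOf j l < (l.take q).length := by rw [htlen]; exact hlt
      have h2 : (l.take q)[List.idxOf j l]'h1 = j := by
        rw [List.getElem_take]
        exact List.getElem_idxOf (List.idxOf_lt_length_iff.mpr hj)
      exact h2 ▸ List.getElem_mem h1
    have hTop : ∀ i ∈ S, ∀ j ∉ S, deg j ≤ deg i := by
      intro i hi j hj
      rw [hS, Finset.mem_union] at hi hj
      push_neg at hj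
      obtain ⟨hjH, hjT⟩ := hj
      have hjl : j ∈ l := (hlmem j).mpr hjH
      rcases hi with hiH | hiT
      · exact hHubTop i hiH j hjH
      · rw [List.mem_toFinset] at hiT
        obtain ⟨p, hp, hpi⟩ := List.getElem_of_mem hiT
        have hpq : p < q := by rw [htlen] at hp; exact hp
        have hjlt : List.idxOf j l < l.length := List.idxOf_lt_length_iff.mpr hjl
        have hjq : q ≤ List.idxOf j l := by
          by_contra hcon
          push_neg at hcon
          exact hjT (hmem_take j hjl hcon)
        have hpl : p < l.length := lt_of_lt_of_le hpq (le_of_lt (lt_of_le_of_lt hjq hjlt))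
        have hpi' : l[p]'hpl = i := by rw [← hpi, List.getElem_take]
        have hrel : l.get ⟨p, hpl⟩ ≤ l.get ⟨List.idxOf j l, hjlt⟩ :=
          hsorted.rel_get_of_lt (by simp only [Fin.mk_lt_mk]; omega)
        have hjget : l.get ⟨List.idxOf j l, hjlt⟩ = j := List.getElem_idxOf hjlt
        have higet : l.get ⟨p, hpl⟩ = i := hpi'
        rw [hjget, higet, hle_iff] at hrel
        exact hkeymono i j hrel
    have hnotmem : l[q]'hq ∉ S := by
      intro hmem
      rcases Finset.mem_union.mp hmem with h1 | h2
      · exact (hlmem _).mp (List.getElem_mem hq) h1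
      · rw [List.mem_toFinset] at h2
        obtain ⟨p, hp, hpe⟩ := List.getElem_of_mem h2
        have hpq : p < q := by rw [htlen] at hp; exact hp
        have hpl : p < l.length := lt_trans hpq hq
        have : l[p]'hpl = l[q]'hq := by rw [← hpe, List.getElem_take]
        have := (List.Nodup.getElem_inj_iff hlnd).mp this
        omega
    have hScardR : (S.card : ℝ) = k * C + q := by
      rw [hScard]; push_cast [hHubCard]; ring
    have hge : k * (C : ℝ) ≤ (S.card : ℝ) := by
      rw [hScardR]
      have : (0 : ℝ) ≤ q := Nat.cast_nonneg q
      linarith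
    have hb := hRemoval S hTop hge (l[q]'hq) hnotmem
    have hCR : (0 : ℝ) < (C : ℝ) := by exact_mod_cast hC
    have hfrac : ((S.card : ℝ)) / C = k + (q : ℝ) / C := by
      rw [hScardR]
      field_simp
    rwa [hfrac] at hb
  -- counting: charge each cut edge to the endpoint of smallest index
  have hfib : ∀ e ∈ Cut,
      (min (List.idxOf e.1 l) (List.idxOf e.2 l)) ∈ Finset.range l.length := by
    intro e he
    obtain ⟨h1, h2⟩ := hCutNonHub e he
    rw [Finset.mem_range]
    have i1 := List.idxOf_lt_length_iff.mpr ((hlmem e.1).mpr h1)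
    have i2 := List.idxOf_lt_length_iff.mpr ((hlmem e.2).mpr h2)
    omega
  have hcount : Cut.card = ∑ q ∈ Finset.range l.length,
      (Cut.filter (fun e => min (List.idxOf e.1 l) (List.idxOf e.2 l) = q)).card :=
    Finset.card_eq_sum_card_fiberwise hfib
  have hfible : ∀ q (hq : q < l.length),
      (Cut.filter (fun e => min (List.idxOf e.1 l) (List.idxOf e.2 l) = q)).card
        ≤ deg (l[q]'hq) := by
    intro q hq
    rw [hdeg]
    apply Finset.card_le_card
    intro e he
    rw [Finset.mem_filter] at he ⊢
    obtain ⟨heC, heq⟩ := he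
    refine ⟨hCutSub heC, ?_⟩
    obtain ⟨h1, h2⟩ := hCutNonHub e heC
    have i1 := List.idxOf_lt_length_iff.mpr ((hlmem e.1).mpr h1)
    have i2 := List.idxOf_lt_length_iff.mpr ((hlmem e.2).mpr h2)
    have hcases : List.idxOf e.1 l = q ∨ List.idxOf e.2 l = q := by omega
    rcases hcases with hq1 | hq2
    · left
      subst hq1
      exact (List.getElem_idxOf i1).symm
    · right
      subst hq2
      exact (List.getElem_idxOf i2).symm
  have main : (Cut.card : ℝ) ≤ ∑ q ∈ Finset.range (C - Hub.card),
      m * (k + (q : ℝ) / C) ^ ((1 : ℝ) / (1 - α)) := by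
    rw [← hlen, hcount]
    push_cast
    apply Finset.sum_le_sum
    intro q hq
    rw [Finset.mem_range] at hq
    calc ((Cut.filter (fun e => min (List.idxOf e.1 l) (List.idxOf e.2 l) = q)).card : ℝ)
        ≤ (deg (l[q]'hq) : ℝ) := Nat.cast_le.mpr (hfible q hq)
      _ ≤ _ := hdegbound q hq
  have hdivrw : (Cut.card : ℝ) / N = 1 / (N : ℝ) * Cut.card := by ring
  rw [hdivrw]
  have hNpos : (0 : ℝ) ≤ 1 / (N : ℝ) := by positivity
  exact mul_le_mul_of_nonneg_left main hNpos
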